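/- If the dynamic programming problem has a uniform value v_∞, then for every ε > 0 there exists N such that for every state s there is a single feasible play (s_m) at s satisfying |(1/n) Σ_{m=1}^{⌊tn⌋} f(s_m) − t·v_∞(s)| ≤ 3ε for all n ≥ N/ε and all t ∈ [ε, 1]. -/

import Mathlib

/-! Take `N` from the uniform value at precision `ε`, and from `s` a play whose `k`-stage
averages `A_k` are `ε`-close to `w s` for all `k ≥ N`. For `n ≥ N/ε` and `t ≥ ε` the prefix
length `k = ⌊tn⌋` is at least `N`, and `(1/n) Σ_{m ≤ k} f(s_m) = (k/n) A_k` with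
`|k/n - t| ≤ 1/n ≤ ε`. Since `A_k ∈ [0,1]`, the splitting
`(k/n) A_k - t w = (k/n - t) A_k + t (A_k - w)` gives the bound `2ε`. -/

open Filter Finset

/-- A dynamic programming problem: a set of states `S`, a correspondence `Phi`
with nonempty values, and a payoff function `f` with values in `[0,1]`. -/
structure DPP (S : Type*) where
  Phi : S → Set S
  phi_nonempty : ∀ s, (Phi s).Nonempty
  f : S → ℝ
  f_mem : ∀ s, f s ∈ Set.Icc (0 : ℝ) 1

variable {S : Type*}

/-- A feasible play at `s`: a sequence `(s_m)_{m ≥ 1}` with `s₁ = s` and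
`s_{m+1} ∈ Φ(s_m)`. -/
def DPP.Feasible (P : DPP S) (s : S) (play : ℕ → S) : Prop :=
  play 1 = s ∧ ∀ m, 1 ≤ m → play (m + 1) ∈ P.Phi (play m)

/-- The `n`-stage average payoff of a play: `(1/n) Σ_{m=1}^n f(s_m)`. -/
noncomputable def DPP.avg (P : DPP S) (n : ℕ) (play : ℕ → S) : ℝ :=
  (1 / (n : ℝ)) * ∑ m ∈ Finset.Icc 1 n, P.f (play m)

/-- The `n`-stage value: supremum of the `n`-stage average payoff over feasible plays. -/
noncomputable def DPP.val (P : DPP S) (n : ℕ) (s : S) : ℝ :=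
  sSup {x | ∃ play, P.Feasible s play ∧ x = P.avg n play}

/-- `w` is a uniform value (see the paper). -/
def DPP.IsUniformValue (P : DPP S) (w : S → ℝ) : Prop :=
  ∀ ε > (0 : ℝ), ∃ N : ℕ, ∀ s : S,
    (∃ play, P.Feasible s play ∧ ∀ n ≥ N, P.avg n play ≥ w s - ε) ∧
    (∀ play, P.Feasible s play → ∀ n ≥ N, P.avg n play ≤ w s + ε)

theorem abs_mul_sub_mul_le_add {r t a b δ η : ℝ} (ha : |a| ≤ 1) (ht : |t| ≤ 1)
    (hrt : |r - t| ≤ δ) (hab : |a - b| ≤ η) : |r * a - t * b| ≤ δ + η :=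
  calc |r * a - t * b| = |(r - t) * a + t * (a - b)| := by ring_nf
    _ ≤ |r - t| * |a| + |t| * |a - b| := by
        rw [← abs_mul, ← abs_mul]; exact abs_add_le _ _
    _ ≤ δ * 1 + 1 * η := by
        gcongr
        · exact (abs_nonneg _).trans hrt
    _ = δ + η := by ring

theorem abs_natFloor_mul_div_sub_le {t n : ℝ} (ht : 0 ≤ t) (hn : 0 < n) :
    |(⌊t * n⌋₊ : ℝ) / n - t| ≤ 1 / n := by
  have hle : (⌊t * n⌋₊ : ℝ) ≤ t * n := Nat.floor_le (by positivity)
  have hlt : t * n - 1 < ⌊t * n⌋₊ := Nat.sub_one_lt_floor _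
  calc |(⌊t * n⌋₊ : ℝ) / n - t| = |(⌊t * n⌋₊ : ℝ) - t * n| / n := by
        rw [← abs_of_pos hn, ← abs_div, abs_of_pos hn, sub_div,
          mul_div_cancel_right₀ _ hn.ne']
    _ ≤ 1 / n := by gcongr; exact abs_sub_le_iff.2 ⟨by linarith, by linarith⟩

namespace DPP

theorem avg_nonneg (P : DPP S) (n : ℕ) (play : ℕ → S) : 0 ≤ P.avg n play :=
  mul_nonneg (by positivity) (sum_nonneg fun m _ => (P.f_mem (play m)).1)

theorem avg_le_one (P : DPP S) (n : ℕ) (play : ℕ → S) : P.avg n play ≤ 1 := by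
  have hsum : ∑ m ∈ Icc 1 n, P.f (play m) ≤ n := by
    simpa using sum_le_sum fun m (_ : m ∈ Icc 1 n) => (P.f_mem (play m)).2
  rcases n.eq_zero_or_pos with rfl | hn
  · simp [avg]
  · rw [avg, one_div_mul_eq_div, div_le_one (by positivity)]
    exact hsum

theorem abs_avg_le_one (P : DPP S) (n : ℕ) (play : ℕ → S) : |P.avg n play| ≤ 1 :=
  abs_le.2 ⟨by linarith [P.avg_nonneg n play], P.avg_le_one n play⟩

theorem sum_Icc_eq_mul_avg (P : DPP S) (n : ℕ) (play : ℕ → S) :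
    ∑ m ∈ Icc 1 n, P.f (play m) = n * P.avg n play := by
  rcases n.eq_zero_or_pos with rfl | hn
  · simp
  · rw [avg, ← mul_assoc, mul_one_div_cancel (by positivity), one_mul]

end DPP

/-- If the problem has a uniform value `w`, then for every `ε > 0` there is `N` such that
from every state `s` there is a single feasible play `(s_m)` with
`|(1/n) Σ_{m=1}^{⌊tn⌋} f(s_m) − t·w(s)| ≤ 3ε` for all `n ≥ N/ε` and all `t ∈ [ε,1]`. -/
theorem uniformValue_constant_payoff_on_play (P : DPP S) (w : S → ℝ)
    (h : P.IsUniformValue w) :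
    ∀ ε > (0 : ℝ), ∃ N : ℕ, ∀ s : S, ∃ play : ℕ → S, P.Feasible s play ∧
      ∀ n : ℕ, (N : ℝ) / ε ≤ (n : ℝ) → ∀ t ∈ Set.Icc ε 1,
        |(1 / (n : ℝ)) * ∑ m ∈ Finset.Icc 1 ⌊t * (n : ℝ)⌋₊, P.f (play m) - t * w s| ≤ 3 * ε := by
  intro ε hε
  obtain ⟨N, hN⟩ := h ε hε
  refine ⟨N + 1, fun s => ?_⟩
  obtain ⟨play, hplay, hlower⟩ := (hN s).1
  refine ⟨play, hplay, fun n hNn t ⟨hεt, ht1⟩ => ?_⟩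
  have hεn : (N : ℝ) + 1 ≤ ε * n := by
    rw [div_le_iff₀ hε] at hNn; push_cast at hNn; linarith
  have hn : (0 : ℝ) < n :=
    pos_of_mul_pos_right ((by positivity : (0 : ℝ) < N + 1).trans_le hεn) hε.le
  have hk : N ≤ ⌊t * n⌋₊ := Nat.le_floor (by nlinarith)
  have havg : |P.avg ⌊t * n⌋₊ play - w s| ≤ ε := abs_sub_le_iff.2
    ⟨by linarith [(hN s).2 play hplay _ hk], by linarith [hlower _ hk]⟩
  have hfloor : |(⌊t * n⌋₊ : ℝ) / n - t| ≤ ε :=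
    (abs_natFloor_mul_div_sub_le (hε.le.trans hεt) hn).trans ((div_le_iff₀ hn).2 (by linarith))
  rw [P.sum_Icc_eq_mul_avg, ← mul_assoc, one_div_mul_eq_div]
  calc _ ≤ ε + ε := abs_mul_sub_mul_le_add (P.abs_avg_le_one _ play)
          (abs_le.2 ⟨by linarith, ht1⟩) hfloor havg
    _ ≤ 3 * ε := by linarith
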